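/- If G is in simplest form and has at least three prime options that are pairwise non-associated, then G is prime. -/

import Mathlib

inductive IGame : Type where
  | mk : List IGame → IGame

namespace IGame

/-- The options of a game. -/
def opts : IGame → List IGame
  | mk l => l

theorem sizeOf_lt_of_mem {x : IGame} {l : List IGame} (h : x ∈ l) :
    sizeOf x < sizeOf (mk l) := by
  have := List.sizeOf_lt_of_mem h
  simp only [mk.sizeOf_spec]
  omega

/-- `x` is an option of `G`. -/
def IsOption (x G : IGame) : Prop := x ∈ G.opts

/-- The empty game `0`. -/
def zero : IGame := mk []

/-- The game `* = {0}`. -/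
def star : IGame := mk [zero]

/-- The game `*2 = {0, *}`. -/
def star2 : IGame := mk [zero, star]

/-- The game `*3 = {0, *, *2}`. -/
def star3 : IGame := mk [zero, star, star2]

/-- Disjunctive sum of games. -/
def add : IGame → IGame → IGame
  | mk l, mk r =>
    mk ((l.attach.map fun x => add x.1 (mk r)) ++
        (r.attach.map fun y => add (mk l) y.1))
termination_by G H => (sizeOf G, sizeOf H)
decreasing_by
  · exact Prod.Lex.left _ _ (sizeOf_lt_of_mem x.2)
  · exact Prod.Lex.right _ (sizeOf_lt_of_mem y.2)

/-- `MisereP G` holds iff the misère outcome of `G` is `P`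
(i.e. `G` has at least one option and no option is a `P`-position). -/
def MisereP : IGame → Prop
  | mk l => l ≠ [] ∧ ∀ x ∈ l, ¬ MisereP x
termination_by G => sizeOf G
decreasing_by exact sizeOf_lt_of_mem (by assumption)

/-- Misère equality of games. -/
def MEquiv (G H : IGame) : Prop :=
  ∀ X : IGame, MisereP (add G X) ↔ MisereP (add H X)

theorem mequiv_refl (G : IGame) : MEquiv G G := fun _ => Iff.rfl
theorem mequiv_symm {G H : IGame} (h : MEquiv G H) : MEquiv H G := fun X => (h X).symm
theorem mequiv_trans {G H K : IGame} (h₁ : MEquiv G H) (h₂ : MEquiv H K) :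
    MEquiv G K := fun X => (h₁ X).trans (h₂ X)

/-- `G` is linked to `H` if `G + T` and `H + T` are both misère `P`-positions for some `T`. -/
def Linked (G H : IGame) : Prop :=
  ∃ T : IGame, MisereP (add G T) ∧ MisereP (add H T)

/-- `H` is a part of `G` if `G = H + X` (misère-equal) for some `X`. -/
def IsPart (H G : IGame) : Prop :=
  ∃ X : IGame, MEquiv G (add H X)

/-- `G` has a reversible option: some option `G'` of `G` has an option `G''` misère-equal
to `G`. -/
def HasReversibleOption (G : IGame) : Prop :=
  ∃ G' ∈ G.opts, ∃ G'' ∈ G'.opts, MEquiv G'' G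

/-- `G` is in simplest (canonical) form: neither `G` nor any of its hereditary
subpositions has a reversible option. -/
def Canonical (G : IGame) : Prop :=
  ∀ H : IGame, Relation.ReflTransGen IsOption H G → ¬ HasReversibleOption H

/-- `G` is even if the simplest form of `G` occurs as an option of the simplest form of
`G + *`. -/
def EvenG (G : IGame) : Prop :=
  ∃ K L : IGame, Canonical K ∧ MEquiv K G ∧ Canonical L ∧ MEquiv L (add G star) ∧
    IsOption K L

/-- `G` is odd if `G + *` is even. -/
def OddG (G : IGame) : Prop := EvenG (add G star)

/-- A unit is a game with an additive inverse (up to misère equality). -/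
def IsUnitG (U : IGame) : Prop :=
  ∃ V : IGame, MEquiv (add U V) zero

/-- `G` and `H` are associates if they differ by a unit. -/
def Assoc (G H : IGame) : Prop :=
  ∃ U : IGame, IsUnitG U ∧ MEquiv G (add H U)

/-- `G` is prime if `G` is not a unit and every part of `G` is associated to `0` or
to `G`. -/
def PrimeG (G : IGame) : Prop :=
  ¬ IsUnitG G ∧ ∀ H : IGame, IsPart H G → Assoc H zero ∨ Assoc H G

/-- The sum `n · G` of `n` copies of `G`. -/
def nsmul : ℕ → IGame → IGame
  | 0, _ => zero
  | n + 1, G => add G (nsmul n G)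

/-- The sum of a list of games. -/
def listSum (L : List IGame) : IGame := L.foldr add zero

/-- The mate `G⁻` of `G`. -/
def mate : IGame → IGame
  | mk [] => star
  | mk (x :: l) => mk ((x :: l).attach.map fun y => mate y.1)
termination_by G => sizeOf G
decreasing_by exact sizeOf_lt_of_mem y.2

/-- The formal birthday of a game. -/
def fbd : IGame → ℕ
  | mk l => (l.attach.map fun x => fbd x.1 + 1).foldr max 0
termination_by G => sizeOf G
decreasing_by exact sizeOf_lt_of_mem x.2

/-- The birthday of a game: the least formal birthday among all misère-equal games. -/
noncomputable def birthday (G : IGame) : ℕ :=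
  sInf (fbd '' {H : IGame | MEquiv G H})

instance setoid : Setoid IGame :=
  ⟨MEquiv, fun _ => mequiv_refl _, mequiv_symm, mequiv_trans⟩

/-- The monoid of misère impartial game values: games modulo misère equality. -/
def MGame := Quotient setoid


/-! If `G = H + X`, then, because `G` has no reversible option, each option of `G` is equal
to an option `H' + X` or `H + X'` of `H + X`: otherwise `H + X` would be linked to that option
by Siegel's linking lemma, which rests on the flatness of the misère order. Hence each prime
option of `G` has `H` or `X` as a part. Of three pairwise non-associated prime options, two
share that summand, and primality of both forces it to be a unit: so `H ≈ 0` or `X ≈ 0`,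
i.e. `H ≈ G`. -/

theorem sizeOf_lt_of_mem_opts {g G : IGame} (h : g ∈ G.opts) : sizeOf g < sizeOf G := by
  cases G
  exact sizeOf_lt_of_mem h

theorem opts_induction {motive : IGame → Prop}
    (ih : ∀ G, (∀ g ∈ G.opts, motive g) → motive G) (G : IGame) : motive G :=
  ih G fun g hg =>
    have := sizeOf_lt_of_mem_opts hg
    opts_induction ih g
termination_by sizeOf G

theorem eq_zero_of_opts_eq_nil {G : IGame} (h : G.opts = []) : G = zero := by
  obtain ⟨l⟩ := G
  obtain rfl : l = [] := h
  rfl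

theorem mem_opts_add {k G H : IGame} :
    k ∈ (add G H).opts ↔ (∃ g ∈ G.opts, k = add g H) ∨ ∃ h ∈ H.opts, k = add G h := by
  obtain ⟨l⟩ := G
  obtain ⟨r⟩ := H
  rw [add]
  simp only [opts, List.mem_append, List.mem_map, List.mem_attach, true_and, Subtype.exists]
  grind

theorem add_mem_opts_add_left {g G : IGame} (hg : g ∈ G.opts) (H : IGame) :
    add g H ∈ (add G H).opts :=
  mem_opts_add.2 (Or.inl ⟨g, hg, rfl⟩)

theorem add_mem_opts_add_right (G : IGame) {h H : IGame} (hh : h ∈ H.opts) :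
    add G h ∈ (add G H).opts :=
  mem_opts_add.2 (Or.inr ⟨h, hh, rfl⟩)

theorem misereP_iff (G : IGame) : MisereP G ↔ G.opts ≠ [] ∧ ∀ g ∈ G.opts, ¬ MisereP g := by
  cases G
  rw [MisereP]
  rfl

theorem misereP_of_forall {G g₀ : IGame} (hg₀ : g₀ ∈ G.opts)
    (h : ∀ g ∈ G.opts, ¬ MisereP g) : MisereP G :=
  (misereP_iff G).2 ⟨List.ne_nil_of_mem hg₀, h⟩

theorem not_misereP_of_mem_opts {g G : IGame} (hg : g ∈ G.opts) (hgP : MisereP g) :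
    ¬ MisereP G :=
  fun hG => ((misereP_iff G).1 hG).2 g hg hgP

theorem not_misereP_zero : ¬ MisereP zero :=
  fun h => ((misereP_iff zero).1 h).1 rfl

theorem misereP_star : MisereP star :=
  misereP_of_forall (List.mem_singleton_self zero) fun _ hg => by
    rw [List.mem_singleton.1 hg]
    exact not_misereP_zero

theorem misereP_add_of_forall {K T t₀ : IGame} (ht₀ : t₀ ∈ T.opts)
    (hK : ∀ k ∈ K.opts, ∃ t ∈ T.opts, MisereP (add k t))
    (hT : ∀ t ∈ T.opts, ¬ MisereP (add K t)) : MisereP (add K T) := by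
  refine misereP_of_forall (add_mem_opts_add_right K ht₀) fun x hx => ?_
  rcases mem_opts_add.1 hx with ⟨k, hk, rfl⟩ | ⟨t, ht, rfl⟩
  · obtain ⟨t, ht, hkt⟩ := hK k hk
    exact not_misereP_of_mem_opts (add_mem_opts_add_right k ht) hkt
  · exact hT t ht

def IsBisim (R : IGame → IGame → Prop) : Prop :=
  ∀ G H, R G H → (∀ g ∈ G.opts, ∃ h ∈ H.opts, R g h) ∧ ∀ h ∈ H.opts, ∃ g ∈ G.opts, R g h

/-- `G` and `H` have the same game tree up to reordering and repetition of options. -/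
def Identical (G H : IGame) : Prop := ∃ R, IsBisim R ∧ R G H

theorem IsBisim.identical {R : IGame → IGame → Prop} (hR : IsBisim R) {G H : IGame}
    (h : R G H) : Identical G H :=
  ⟨R, hR, h⟩

theorem isBisim_identical : IsBisim Identical := by
  rintro G H ⟨R, hR, hGH⟩
  obtain ⟨forth, back⟩ := hR G H hGH
  exact ⟨fun g hg => (forth g hg).imp fun _ ⟨hh, r⟩ => ⟨hh, hR.identical r⟩,
    fun h hh => (back h hh).imp fun _ ⟨hg, r⟩ => ⟨hg, hR.identical r⟩⟩

theorem Identical.misereP_iff {G H : IGame} (h : Identical G H) : MisereP G ↔ MisereP H := by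
  induction G using opts_induction generalizing H with
  | ih G IH =>
  obtain ⟨forth, back⟩ := isBisim_identical G H h
  rw [IGame.misereP_iff G, IGame.misereP_iff H]
  constructor
  · rintro ⟨hne, hG⟩
    obtain ⟨g, hg⟩ := List.exists_mem_of_ne_nil _ hne
    obtain ⟨h, hh, -⟩ := forth g hg
    refine ⟨List.ne_nil_of_mem hh, fun h hh hP => ?_⟩
    obtain ⟨g, hg, hgh⟩ := back h hh
    exact hG g hg ((IH g hg hgh).2 hP)
  · rintro ⟨hne, hH⟩
    obtain ⟨h, hh⟩ := List.exists_mem_of_ne_nil _ hne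
    obtain ⟨g, hg, -⟩ := back h hh
    refine ⟨List.ne_nil_of_mem hg, fun g hg hP => ?_⟩
    obtain ⟨h, hh, hgh⟩ := forth g hg
    exact hH h hh ((IH g hg hgh).1 hP)

theorem Identical.add_right {A A' : IGame} (h : Identical A A') (C : IGame) :
    Identical (add A C) (add A' C) := by
  refine IsBisim.identical (R := fun G H => ∃ A A' C, Identical A A' ∧ G = add A C ∧
    H = add A' C) ?_ ⟨A, A', C, h, rfl, rfl⟩
  rintro _ _ ⟨A, A', C, h, rfl, rfl⟩
  obtain ⟨forth, back⟩ := isBisim_identical A A' h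
  constructor
  · intro k hk
    rcases mem_opts_add.1 hk with ⟨a, ha, rfl⟩ | ⟨c, hc, rfl⟩
    · obtain ⟨a', ha', r⟩ := forth a ha
      exact ⟨_, add_mem_opts_add_left ha' C, a, a', C, r, rfl, rfl⟩
    · exact ⟨_, add_mem_opts_add_right A' hc, A, A', c, h, rfl, rfl⟩
  · intro k hk
    rcases mem_opts_add.1 hk with ⟨a', ha', rfl⟩ | ⟨c, hc, rfl⟩
    · obtain ⟨a, ha, r⟩ := back a' ha'
      exact ⟨_, add_mem_opts_add_left ha C, a, a', C, r, rfl, rfl⟩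
    · exact ⟨_, add_mem_opts_add_right A hc, A, A', c, h, rfl, rfl⟩

theorem Identical.mequiv {A B : IGame} (h : Identical A B) : MEquiv A B :=
  fun X => (h.add_right X).misereP_iff

theorem identical_zero_add (A : IGame) : Identical (add zero A) A := by
  refine IsBisim.identical (R := fun G H => G = add zero H) ?_ rfl
  rintro _ H rfl
  constructor
  · intro k hk
    rcases mem_opts_add.1 hk with ⟨g, hg, -⟩ | ⟨h, hh, rfl⟩
    · exact absurd hg List.not_mem_nil
    · exact ⟨h, hh, rfl⟩
  · exact fun h hh => ⟨_, add_mem_opts_add_right zero hh, rfl⟩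

theorem identical_add_comm (A B : IGame) : Identical (add A B) (add B A) := by
  refine IsBisim.identical (R := fun G H => ∃ A B, G = add A B ∧ H = add B A) ?_
    ⟨A, B, rfl, rfl⟩
  rintro _ _ ⟨A, B, rfl, rfl⟩
  constructor
  · intro k hk
    rcases mem_opts_add.1 hk with ⟨a, ha, rfl⟩ | ⟨b, hb, rfl⟩
    · exact ⟨_, add_mem_opts_add_right B ha, a, B, rfl, rfl⟩
    · exact ⟨_, add_mem_opts_add_left hb A, A, b, rfl, rfl⟩
  · intro k hk
    rcases mem_opts_add.1 hk with ⟨b, hb, rfl⟩ | ⟨a, ha, rfl⟩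
    · exact ⟨_, add_mem_opts_add_right A hb, A, b, rfl, rfl⟩
    · exact ⟨_, add_mem_opts_add_left ha B, a, B, rfl, rfl⟩

theorem identical_add_assoc (A B C : IGame) :
    Identical (add (add A B) C) (add A (add B C)) := by
  refine IsBisim.identical (R := fun G H => ∃ A B C, G = add (add A B) C ∧
    H = add A (add B C)) ?_ ⟨A, B, C, rfl, rfl⟩
  rintro _ _ ⟨A, B, C, rfl, rfl⟩
  constructor
  · intro k hk
    rcases mem_opts_add.1 hk with ⟨j, hj, rfl⟩ | ⟨c, hc, rfl⟩
    · rcases mem_opts_add.1 hj with ⟨a, ha, rfl⟩ | ⟨b, hb, rfl⟩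
      · exact ⟨_, add_mem_opts_add_left ha _, a, B, C, rfl, rfl⟩
      · exact ⟨_, add_mem_opts_add_right A (add_mem_opts_add_left hb C), A, b, C, rfl, rfl⟩
    · exact ⟨_, add_mem_opts_add_right A (add_mem_opts_add_right B hc), A, B, c, rfl, rfl⟩
  · intro k hk
    rcases mem_opts_add.1 hk with ⟨a, ha, rfl⟩ | ⟨j, hj, rfl⟩
    · exact ⟨_, add_mem_opts_add_left (add_mem_opts_add_left ha B) C, a, B, C, rfl, rfl⟩
    · rcases mem_opts_add.1 hj with ⟨b, hb, rfl⟩ | ⟨c, hc, rfl⟩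
      · exact ⟨_, add_mem_opts_add_left (add_mem_opts_add_right A hb) C, A, b, C, rfl, rfl⟩
      · exact ⟨_, add_mem_opts_add_right _ hc, A, B, c, rfl, rfl⟩

theorem mequiv_zero_add (A : IGame) : MEquiv (add zero A) A :=
  (identical_zero_add A).mequiv

theorem mequiv_add_comm (A B : IGame) : MEquiv (add A B) (add B A) :=
  (identical_add_comm A B).mequiv

theorem mequiv_add_assoc (A B C : IGame) : MEquiv (add (add A B) C) (add A (add B C)) :=
  (identical_add_assoc A B C).mequiv

theorem mequiv_add_zero (A : IGame) : MEquiv (add A zero) A :=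
  mequiv_trans (mequiv_add_comm A zero) (mequiv_zero_add A)

theorem MEquiv.add_right {A B : IGame} (h : MEquiv A B) (C : IGame) :
    MEquiv (add A C) (add B C) := fun X =>
  (identical_add_assoc A C X).misereP_iff.trans
    ((h (add C X)).trans (identical_add_assoc B C X).misereP_iff.symm)

theorem MEquiv.add_left {A B : IGame} (h : MEquiv A B) (C : IGame) :
    MEquiv (add C A) (add C B) :=
  calc add C A
    _ ≈ add A C := mequiv_add_comm C A
    _ ≈ add B C := h.add_right C
    _ ≈ add C B := mequiv_add_comm B C

theorem mequiv_add_left_comm (A B C : IGame) :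
    MEquiv (add A (add B C)) (add B (add A C)) :=
  calc add A (add B C)
    _ ≈ add (add A B) C := mequiv_symm (mequiv_add_assoc A B C)
    _ ≈ add (add B A) C := (mequiv_add_comm A B).add_right C
    _ ≈ add B (add A C) := mequiv_add_assoc B A C

theorem mem_opts_mate {G : IGame} (h : G.opts ≠ []) {m : IGame} :
    m ∈ (mate G).opts ↔ ∃ g ∈ G.opts, m = mate g := by
  obtain ⟨_ | ⟨g₀, l⟩⟩ := G
  · exact absurd rfl h
  · rw [mate]
    simp only [opts, List.mem_map, List.mem_attach, true_and, Subtype.exists]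
    grind

theorem misereP_add_mate (G : IGame) : MisereP (add G (mate G)) := by
  induction G using opts_induction with
  | ih G IH =>
  obtain ⟨_ | ⟨g₀, l⟩⟩ := G
  · rw [mate]
    exact (identical_zero_add star).misereP_iff.2 misereP_star
  · have hne : (mk (g₀ :: l)).opts ≠ [] := List.cons_ne_nil g₀ l
    refine misereP_add_of_forall ((mem_opts_mate hne).2 ⟨g₀, List.mem_cons_self, rfl⟩)
      (fun g hg => ⟨mate g, (mem_opts_mate hne).2 ⟨g, hg, rfl⟩, IH g hg⟩) fun m hm => ?_
    obtain ⟨g, hg, rfl⟩ := (mem_opts_mate hne).1 hm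
    exact not_misereP_of_mem_opts (add_mem_opts_add_left hg _) (IH g hg)

/-- The misère order of impartial games is flat. -/
theorem mequiv_of_forall_misereP_add_imp {A B : IGame}
    (h : ∀ X, MisereP (add A X) → MisereP (add B X)) : MEquiv A B := by
  induction A using opts_induction generalizing B with
  | ih A IH =>
  by_contra hAB
  obtain ⟨X₀, hX₀⟩ : ∃ X₀, ¬ (MisereP (add A X₀) ↔ MisereP (add B X₀)) := by
    simpa only [MEquiv, not_forall] using hAB
  have hA₀ : ¬ MisereP (add A X₀) := fun hA => hX₀ (iff_of_true hA (h X₀ hA))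
  have hB₀ : MisereP (add B X₀) := by tauto
  have hwit : ∀ a ∈ A.opts, ∃ t, MisereP (add a t) ∧ ¬ MisereP (add B t) := by
    intro a ha
    by_contra! hw
    have hAm := misereP_add_mate A
    exact not_misereP_of_mem_opts (add_mem_opts_add_left ha _)
      ((IH a ha hw (mate A)).2 (h _ hAm)) hAm
  choose! t htP htN using hwit
  let V := mk (X₀ :: A.opts.map t)
  have hX₀V : X₀ ∈ V.opts := List.mem_cons_self
  have htV : ∀ a ∈ A.opts, t a ∈ V.opts :=
    fun a ha => List.mem_cons_of_mem _ (List.mem_map_of_mem ha)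
  have hAV : MisereP (add A V) := by
    refine misereP_add_of_forall hX₀V (fun a ha => ⟨t a, htV a ha, htP a ha⟩) fun v hv => ?_
    rcases List.mem_cons.1 hv with rfl | hv
    · exact hA₀
    · obtain ⟨a, ha, rfl⟩ := List.mem_map.1 hv
      exact not_misereP_of_mem_opts (add_mem_opts_add_left ha _) (htP a ha)
  exact not_misereP_of_mem_opts (add_mem_opts_add_right B hX₀V) hB₀ (h V hAV)

theorem exists_misereP_add_of_not_mequiv {A B : IGame} (h : ¬ MEquiv A B) :
    ∃ T, MisereP (add A T) ∧ ¬ MisereP (add B T) := by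
  by_contra! hAB
  exact h (mequiv_of_forall_misereP_add_imp hAB)

theorem not_linked_of_mem_opts {g G : IGame} (hg : g ∈ G.opts) : ¬ Linked G g :=
  fun ⟨T, hG, hg'⟩ => not_misereP_of_mem_opts (add_mem_opts_add_left hg T) hg' hG

theorem Linked.congr_left {A A' B : IGame} (h : Linked A B) (hA : MEquiv A A') : Linked A' B :=
  let ⟨T, hAT, hBT⟩ := h
  ⟨T, (hA T).1 hAT, hBT⟩

/-- Siegel's linking lemma. -/
theorem linked_of_forall_not_mequiv {K B : IGame} (hK : ∀ k ∈ K.opts, ¬ MEquiv k B)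
    (hB : ∀ b ∈ B.opts, ¬ MEquiv b K) : Linked K B := by
  choose! t htP htN using fun k hk => exists_misereP_add_of_not_mequiv (hK k hk)
  choose! s hsP hsN using fun b hb => exists_misereP_add_of_not_mequiv (hB b hb)
  let T := mk (K.opts.map t ++ B.opts.map s)
  have htT : ∀ k ∈ K.opts, t k ∈ T.opts :=
    fun k hk => List.mem_append_left _ (List.mem_map_of_mem hk)
  have hsT : ∀ b ∈ B.opts, s b ∈ T.opts :=
    fun b hb => List.mem_append_right _ (List.mem_map_of_mem hb)
  by_cases hT : T.opts = []
  · obtain ⟨hK₀, hB₀⟩ : K.opts = [] ∧ B.opts = [] := by simpa [T, opts] using hT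
    have h₀ : MisereP (add zero star) := (identical_zero_add star).misereP_iff.2 misereP_star
    rw [eq_zero_of_opts_eq_nil hK₀, eq_zero_of_opts_eq_nil hB₀]
    exact ⟨star, h₀, h₀⟩
  obtain ⟨t₀, ht₀⟩ := List.exists_mem_of_ne_nil _ hT
  have hmemT : ∀ x ∈ T.opts, (∃ k ∈ K.opts, t k = x) ∨ ∃ b ∈ B.opts, s b = x := by
    simp [T, opts]
  refine ⟨T, misereP_add_of_forall ht₀ (fun k hk => ⟨t k, htT k hk, htP k hk⟩) fun x hx => ?_,
    misereP_add_of_forall ht₀ (fun b hb => ⟨s b, hsT b hb, hsP b hb⟩) fun x hx => ?_⟩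
  · rcases hmemT x hx with ⟨k, hk, rfl⟩ | ⟨b, hb, rfl⟩
    · exact not_misereP_of_mem_opts (add_mem_opts_add_left hk _) (htP k hk)
    · exact hsN b hb
  · rcases hmemT x hx with ⟨k, hk, rfl⟩ | ⟨b, hb, rfl⟩
    · exact htN k hk
    · exact not_misereP_of_mem_opts (add_mem_opts_add_left hb _) (hsP b hb)

theorem exists_mem_opts_mequiv_of_mequiv {K G g : IGame} (hG : ¬ HasReversibleOption G)
    (hKG : MEquiv K G) (hg : g ∈ G.opts) : ∃ k ∈ K.opts, MEquiv k g := by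
  by_contra! hK
  have hlinked : Linked K g :=
    linked_of_forall_not_mequiv hK fun b hb hbK => hG ⟨g, hg, b, hb, mequiv_trans hbK hKG⟩
  exact not_linked_of_mem_opts hg (hlinked.congr_left hKG)

theorem isPart_or_isPart_of_mem_opts {G H X P : IGame} (hG : ¬ HasReversibleOption G)
    (hGHX : MEquiv G (add H X)) (hP : P ∈ G.opts) : IsPart H P ∨ IsPart X P := by
  obtain ⟨k, hk, hkP⟩ := exists_mem_opts_mequiv_of_mequiv hG (mequiv_symm hGHX) hP
  rcases mem_opts_add.1 hk with ⟨h, -, rfl⟩ | ⟨x, -, rfl⟩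
  · exact Or.inr ⟨h, mequiv_trans (mequiv_symm hkP) (mequiv_add_comm h X)⟩
  · exact Or.inl ⟨x, mequiv_symm hkP⟩

theorem isUnitG_of_add_mequiv_zero {U V : IGame} (h : MEquiv (add U V) zero) : IsUnitG V :=
  ⟨U, mequiv_trans (mequiv_add_comm V U) h⟩

theorem isUnitG_add {U W : IGame} (hU : IsUnitG U) (hW : IsUnitG W) : IsUnitG (add U W) := by
  obtain ⟨U', hU'⟩ := hU
  obtain ⟨W', hW'⟩ := hW
  refine ⟨add U' W', ?_⟩
  calc add (add U W) (add U' W')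
    _ ≈ add U (add W (add U' W')) := mequiv_add_assoc U W _
    _ ≈ add U (add U' (add W W')) := (mequiv_add_left_comm W U' W').add_left U
    _ ≈ add (add U U') (add W W') := mequiv_symm (mequiv_add_assoc U U' _)
    _ ≈ add zero (add W W') := hU'.add_right _
    _ ≈ zero := mequiv_trans (mequiv_zero_add _) hW'

theorem not_isUnitG_of_mem_opts {G P : IGame} (hG : ¬ HasReversibleOption G) (hP : P ∈ G.opts)
    (hPU : ¬ IsUnitG P) : ¬ IsUnitG G := by
  rintro ⟨V, hGV⟩
  -- `0 = G + V` is not linked to its option `P + V`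
  obtain ⟨b, hb, hb0⟩ : ∃ b ∈ (add P V).opts, MEquiv b zero := by
    by_contra! h
    exact not_linked_of_mem_opts (add_mem_opts_add_left hP V)
      ((linked_of_forall_not_mequiv (fun k hk => absurd hk List.not_mem_nil) h).congr_left
        (mequiv_symm hGV))
  rcases mem_opts_add.1 hb with ⟨p, hp, rfl⟩ | ⟨v, -, rfl⟩
  · refine hG ⟨P, hP, p, hp, ?_⟩
    calc p
      _ ≈ add p zero := mequiv_symm (mequiv_add_zero p)
      _ ≈ add p (add G V) := (mequiv_symm hGV).add_left p
      _ ≈ add G (add p V) := mequiv_add_left_comm p G V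
      _ ≈ add G zero := hb0.add_left G
      _ ≈ G := mequiv_add_zero G
  · exact hPU ⟨v, hb0⟩

theorem assoc_of_mequiv_add {G H X : IGame} (h : MEquiv G (add H X)) (hX : IsUnitG X) :
    Assoc H G := by
  obtain ⟨Y, hXY⟩ := hX
  refine ⟨Y, isUnitG_of_add_mequiv_zero hXY, ?_⟩
  calc H
    _ ≈ add H zero := mequiv_symm (mequiv_add_zero H)
    _ ≈ add H (add X Y) := (mequiv_symm hXY).add_left H
    _ ≈ add (add H X) Y := mequiv_symm (mequiv_add_assoc H X Y)
    _ ≈ add G Y := (mequiv_symm h).add_right Y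

theorem Assoc.symm {A B : IGame} (h : Assoc A B) : Assoc B A :=
  let ⟨_, hU, hAB⟩ := h
  assoc_of_mequiv_add hAB hU

theorem Assoc.trans {A B C : IGame} (hAB : Assoc A B) (hBC : Assoc B C) : Assoc A C := by
  obtain ⟨U, hU, hAB⟩ := hAB
  obtain ⟨W, hW, hBC⟩ := hBC
  exact ⟨add W U, isUnitG_add hW hU,
    mequiv_trans hAB (mequiv_trans (hBC.add_right U) (mequiv_add_assoc C W U))⟩

theorem isUnitG_of_assoc_zero {A : IGame} (h : Assoc A zero) : IsUnitG A := by
  obtain ⟨U, ⟨W, hUW⟩, hA⟩ := h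
  exact ⟨W, mequiv_trans (hA.add_right W) (mequiv_trans ((mequiv_zero_add U).add_right W) hUW)⟩

theorem PrimeG.assoc_zero_of_isPart {P Q Y : IGame} (hP : PrimeG P) (hQ : PrimeG Q)
    (hPQ : ¬ Assoc P Q) (hYP : IsPart Y P) (hYQ : IsPart Y Q) : Assoc Y zero := by
  rcases hP.2 Y hYP with hY | hYP
  · exact hY
  rcases hQ.2 Y hYQ with hY | hYQ
  · exact hY
  exact absurd (hYP.symm.trans hYQ) hPQ

/-- If `G` is in simplest form and has at least three prime options that are pairwise
non-associated, then `G` is prime. -/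
theorem prime_of_three_prime_options (G : IGame) (hG : Canonical G)
    (P₁ P₂ P₃ : IGame) (h₁ : P₁ ∈ G.opts) (h₂ : P₂ ∈ G.opts) (h₃ : P₃ ∈ G.opts)
    (hp₁ : PrimeG P₁) (hp₂ : PrimeG P₂) (hp₃ : PrimeG P₃)
    (h₁₂ : ¬ Assoc P₁ P₂) (h₁₃ : ¬ Assoc P₁ P₃) (h₂₃ : ¬ Assoc P₂ P₃) :
    PrimeG G := by
  have hG₀ : ¬ HasReversibleOption G := hG G .refl
  refine ⟨not_isUnitG_of_mem_opts hG₀ h₁ hp₁.1, fun H ⟨X, hGHX⟩ => ?_⟩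
  have side {P : IGame} (hP : P ∈ G.opts) : IsPart H P ∨ IsPart X P :=
    isPart_or_isPart_of_mem_opts hG₀ hGHX hP
  have hH {P Q : IGame} (hP : PrimeG P) (hQ : PrimeG Q) (hPQ : ¬ Assoc P Q)
      (hHP : IsPart H P) (hHQ : IsPart H Q) : Assoc H zero ∨ Assoc H G :=
    Or.inl (hP.assoc_zero_of_isPart hQ hPQ hHP hHQ)
  have hX {P Q : IGame} (hP : PrimeG P) (hQ : PrimeG Q) (hPQ : ¬ Assoc P Q)
      (hXP : IsPart X P) (hXQ : IsPart X Q) : Assoc H zero ∨ Assoc H G :=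
    Or.inr <| assoc_of_mequiv_add hGHX <|
      isUnitG_of_assoc_zero (hP.assoc_zero_of_isPart hQ hPQ hXP hXQ)
  rcases side h₁ with H₁ | X₁ <;> rcases side h₂ with H₂ | X₂
  · exact hH hp₁ hp₂ h₁₂ H₁ H₂
  · rcases side h₃ with H₃ | X₃
    · exact hH hp₁ hp₃ h₁₃ H₁ H₃
    · exact hX hp₂ hp₃ h₂₃ X₂ X₃
  · rcases side h₃ with H₃ | X₃
    · exact hH hp₂ hp₃ h₂₃ H₂ H₃
    · exact hX hp₁ hp₃ h₁₃ X₁ X₃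
  · exact hX hp₁ hp₂ h₁₂ X₁ X₂

end IGame
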